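/- Let (X, ρ, μ) be a compact metric measure space with a probability measure μ satisfying μ(B(x,r)) ≤ A r^q for all x, r, and let K : X × X → R satisfy |K(x,y)| ≤ n^q / max(1, n ρ(x,y))^S with S > q. Then sup_{x∈X} ∫_X |K(x,y)| dμ(y) ≤ c, where c depends only on A, q, S and not on n. -/

import Mathlib

/-!
Layer-cake argument. If `t < |K x y|` then `n * dist x y < (n ^ q / t) ^ (1 / S)`, so the superlevel
set `{y | t < |K x y|}` lies in a ball of radius `(n ^ q / t) ^ (1 / S) / n` and has measure at most
`A n ^ (-q) (n ^ q / t) ^ (q / S)`; it is empty for `t ≥ n ^ q`. Since `q / S < 1` the tail bound is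
integrable near `t = 0`, and `∫₀^{n^q} A n ^ (-q) (n ^ q / t) ^ (q / S) dt = A S / (S - q)`, whatever `n` is.
-/

open MeasureTheory Set

theorem lt_rpow_inv_of_lt_div_max_one_rpow {a b t S : ℝ} (ha : 0 ≤ a) (ht : 0 < t) (hS : 0 < S)
    (h : t < b / max 1 a ^ S) : a < (b / t) ^ S⁻¹ := by
  have hmax : 0 < max 1 a ^ S := by positivity
  have hb : 0 < b := (div_pos_iff_of_pos_right hmax).1 (ht.trans h)
  rw [Real.lt_rpow_inv_iff_of_pos ha (by positivity) hS, lt_div_iff₀ ht]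
  calc a ^ S * t ≤ max 1 a ^ S * t := by gcongr; exact le_max_right 1 a
    _ < b := by rwa [mul_comm, ← lt_div_iff₀ hmax]

theorem setOf_lt_subset_closedBall {X : Type*} [PseudoMetricSpace X] {f : X → ℝ} {x : X}
    {B n S t : ℝ} (hn : 0 < n) (hS : 0 < S) (ht : 0 < t)
    (hf : ∀ y, f y ≤ B / max 1 (n * dist x y) ^ S) :
    {y | t < f y} ⊆ Metric.closedBall x ((B / t) ^ S⁻¹ / n) := fun y hy => by
  rw [Metric.mem_closedBall, dist_comm, le_div_iff₀' hn]
  exact (lt_rpow_inv_of_lt_div_max_one_rpow (by positivity) ht hS (hy.out.trans_le (hf y))).le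

theorem measure_setOf_lt_le_of_le_div_max_one_rpow {X : Type*} [PseudoMetricSpace X]
    [MeasurableSpace X] {μ : Measure X} [IsFiniteMeasure μ] {f : X → ℝ} {x : X}
    {A q B n S t : ℝ} (hB : 0 < B) (hn : 0 < n) (hS : 0 < S) (ht : 0 < t)
    (hball : ∀ r, 0 < r → (μ (Metric.closedBall x r)).toReal ≤ A * r ^ q)
    (hf : ∀ y, f y ≤ B / max 1 (n * dist x y) ^ S) :
    μ {y | t < f y} ≤ ENNReal.ofReal (A / n ^ q * (B / t) ^ (q / S)) := by
  have hr : 0 < (B / t) ^ S⁻¹ / n := by positivity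
  calc μ {y | t < f y} ≤ μ (Metric.closedBall x ((B / t) ^ S⁻¹ / n)) :=
        measure_mono (setOf_lt_subset_closedBall hn hS ht hf)
    _ ≤ ENNReal.ofReal (A * ((B / t) ^ S⁻¹ / n) ^ q) :=
        ENNReal.le_ofReal_iff_toReal_le (measure_ne_top μ _) 
          (ENNReal.toReal_nonneg.trans (hball _ hr)) |>.2 (hball _ hr)
    _ = ENNReal.ofReal (A / n ^ q * (B / t) ^ (q / S)) := by
      rw [Real.div_rpow (by positivity) hn.le, ← Real.rpow_mul (by positivity), inv_mul_eq_div]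
      ring_nf

theorem setLIntegral_Ioc_ofReal_div_rpow {B p : ℝ} (hB : 0 < B) (hp : p < 1) :
    ∫⁻ t in Ioc 0 B, ENNReal.ofReal ((B / t) ^ p) = ENNReal.ofReal (B / (1 - p)) := by
  have hp' : -1 < -p := by linarith
  have hsplit : EqOn (fun t => (B / t) ^ p) (fun t => B ^ p * t ^ (-p)) (Ioc 0 B) := by
    intro t ht
    simp only
    rw [Real.div_rpow hB.le ht.1.le, Real.rpow_neg ht.1.le, div_eq_mul_inv]
  have hint : IntegrableOn (fun t : ℝ => B ^ p * t ^ (-p)) (Ioc 0 B) :=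
    (intervalIntegrable_iff_integrableOn_Ioc_of_le hB.le).1
      ((intervalIntegral.intervalIntegrable_rpow' hp').const_mul _)
  rw [setLIntegral_congr_fun measurableSet_Ioc (fun t ht => congrArg ENNReal.ofReal (hsplit ht)),
    ← ofReal_integral_eq_lintegral_ofReal hint
      ((ae_restrict_iff' measurableSet_Ioc).2 (.of_forall fun t ht => by positivity [ht.1])),
    ← intervalIntegral.integral_of_le hB.le, intervalIntegral.integral_const_mul,
    integral_rpow (.inl hp'), Real.zero_rpow (by linarith), sub_zero, mul_div_assoc',
    ← Real.rpow_add hB, add_neg_cancel_left, Real.rpow_one, neg_add_eq_sub]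

theorem lintegral_ofReal_le_of_meas_lt_le_mul_div_rpow {α : Type*} [MeasurableSpace α]
    {μ : Measure α} {f : α → ℝ} {M B p : ℝ} (hf : AEMeasurable f μ) (hf0 : ∀ y, 0 ≤ f y)
    (hfB : ∀ y, f y ≤ B) (hM : 0 ≤ M) (hB : 0 < B) (hp : p < 1)
    (htail : ∀ t, 0 < t → μ {y | t < f y} ≤ ENNReal.ofReal (M * (B / t) ^ p)) :
    ∫⁻ y, ENNReal.ofReal (f y) ∂μ ≤ ENNReal.ofReal (M * (B / (1 - p))) := by
  have hempty : ∀ t, B ≤ t → {y | t < f y} = ∅ := fun t ht =>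
    eq_empty_of_forall_notMem fun y hy => (hfB y).not_gt (ht.trans_lt hy)
  calc ∫⁻ y, ENNReal.ofReal (f y) ∂μ
      = ∫⁻ t in Ioi 0, μ {y | t < f y} := lintegral_eq_lintegral_meas_lt μ (.of_forall hf0) hf
    _ = ∫⁻ t in Ioc 0 B, μ {y | t < f y} := by
      rw [← Ioc_union_Ioi_eq_Ioi hB.le, lintegral_union measurableSet_Ioi
        (Ioc_disjoint_Ioi le_rfl), setLIntegral_congr_fun measurableSet_Ioi
        (fun t ht => by rw [hempty t (le_of_lt ht), measure_empty]), lintegral_zero, add_zero]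
    _ ≤ ∫⁻ t in Ioc 0 B, ENNReal.ofReal M * ENNReal.ofReal ((B / t) ^ p) :=
      setLIntegral_mono' measurableSet_Ioc fun t ht =>
        (htail t ht.1).trans_eq (ENNReal.ofReal_mul hM)
    _ = ENNReal.ofReal (M * (B / (1 - p))) := by
      rw [lintegral_const_mul' _ _ ENNReal.ofReal_ne_top, setLIntegral_Ioc_ofReal_div_rpow hB hp,
        ← ENNReal.ofReal_mul hM]

theorem integral_le_of_meas_lt_le_mul_div_rpow {α : Type*} [MeasurableSpace α]
    {μ : Measure α} {f : α → ℝ} {M B p : ℝ} (hf0 : ∀ y, 0 ≤ f y)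
    (hfB : ∀ y, f y ≤ B) (hM : 0 ≤ M) (hB : 0 < B) (hp : p < 1)
    (htail : ∀ t, 0 < t → μ {y | t < f y} ≤ ENNReal.ofReal (M * (B / t) ^ p)) :
    ∫ y, f y ∂μ ≤ M * (B / (1 - p)) := by
  have hp' : 0 < 1 - p := by linarith
  by_cases hfi : Integrable f μ
  · rw [integral_eq_lintegral_of_nonneg_ae (.of_forall hf0) hfi.aestronglyMeasurable]
    exact ENNReal.toReal_le_of_le_ofReal (by positivity)
      (lintegral_ofReal_le_of_meas_lt_le_mul_div_rpow hfi.aemeasurable hf0 hfB hM hB hp htail)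
  · rw [integral_undef hfi]
    positivity

theorem kernel_lebesgue_constant_bound (A q S : ℝ) (hA : 0 < A) (hq : 1 ≤ q)
    (hS : q < S) :
    ∃ c > 0,
      ∀ (X : Type) [MetricSpace X] [CompactSpace X] [MeasurableSpace X]
        [BorelSpace X] (μ : Measure X) [IsProbabilityMeasure μ]
        (K : X → X → ℝ) (n : ℝ), 1 ≤ n →
        (∀ (x : X) (r : ℝ), 0 < r → (μ (Metric.closedBall x r)).toReal ≤ A * r ^ q) →
        (∀ x y : X, |K x y| ≤ n ^ q / max 1 (n * dist x y) ^ S) →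
        ∀ x : X, ∫ y, |K x y| ∂μ ≤ c := by
  have hS0 : 0 < S := by linarith
  refine ⟨A * S / (S - q), div_pos (by positivity) (by linarith), ?_⟩
  intro X _ _ _ _ μ _ K n hn hball hK x
  have hn0 : 0 < n := by linarith
  have hnq : 0 < n ^ q := by positivity
  have hKbound : ∀ y, |K x y| ≤ n ^ q := fun y =>
    (hK x y).trans (div_le_self hnq.le (Real.one_le_rpow (le_max_left _ _) hS0.le))
  calc ∫ y, |K x y| ∂μ ≤ A / n ^ q * (n ^ q / (1 - q / S)) :=
        integral_le_of_meas_lt_le_mul_div_rpow (fun _ => abs_nonneg _) hKbound (by positivity)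
          hnq ((div_lt_one hS0).2 hS) fun t ht =>
            measure_setOf_lt_le_of_le_div_max_one_rpow hnq hn0 hS0 ht (hball x) (hK x)
    _ = A * S / (S - q) := by
      field_simp
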